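/- Let T be a strongly binary tree with n ≥ 2 leaves and let K ≥ 1 be an integer. Then the number of cuts y of T with |LB(y)| ≤ K (i.e., inducing clusterings with at most K clusters) is at most (2n)^K. -/
import Mathlib


/-- A strongly binary tree: either a single leaf, or an internal node with an
ordered pair of strongly binary subtrees. -/
inductive SBTree where
  | leaf : SBTree
  | node : SBTree → SBTree → SBTree
deriving DecidableEq

/-- The subtree of `T` sitting at the position described by the path `p`
(`false` = go to the left child, `true` = go to the right child), if it exists.
Positions `p` with `subtreeAt T p ≠ none` are the nodes of `T`; the root is `[]`,
and the parent of a nonroot node `p` is `p.dropLast`. -/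
def SBTree.subtreeAt : SBTree → List Bool → Option SBTree
  | t, [] => some t
  | .leaf, _ :: _ => none
  | .node l r, b :: p => (if b then r else l).subtreeAt p

/-- `p` is a node of `T`. -/
def SBTree.IsNodePos (T : SBTree) (p : List Bool) : Prop := (T.subtreeAt p).isSome

/-- `p` is a leaf of `T`. -/
def SBTree.IsLeafPos (T : SBTree) (p : List Bool) : Prop := T.subtreeAt p = some .leaf

/-- `p` is an internal node of `T`. -/
def SBTree.IsInternalPos (T : SBTree) (p : List Bool) : Prop :=
  ∃ l r, T.subtreeAt p = some (.node l r)

/-- A cut of `T`: an assignment `y` of `{0,1}` (here `Bool`) to the nodes of `T`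
(normalized to `false` outside the tree) such that every leaf is assigned `1` and,
whenever an internal node is assigned `1`, both of its children are assigned `1`. -/
def SBTree.IsCut (T : SBTree) (y : List Bool → Bool) : Prop :=
  (∀ p, ¬ T.IsNodePos p → y p = false) ∧
  (∀ p, T.IsLeafPos p → y p = true) ∧
  (∀ p, T.IsInternalPos p → y p = true →
    y (p ++ [false]) = true ∧ y (p ++ [true]) = true)

/-- The lower boundary `LB(y)` of a cut: the nodes `v` with `y v = 1` such that `v`
is the root or `y (parent v) = 0`; its cardinality is the number of clusters
induced by the cut. -/
def SBTree.LB (T : SBTree) (y : List Bool → Bool) : Set (List Bool) :=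
  {p | T.IsNodePos p ∧ y p = true ∧ (p = [] ∨ y p.dropLast = false)}

/-- The set `T'_y`: internal nodes `v` of `T` such that either `y v = 0`, or
`y v = 1` and (`v` is the root or `y (parent v) = 0`). -/
def SBTree.Tset (T : SBTree) (y : List Bool → Bool) : Set (List Bool) :=
  {p | T.IsInternalPos p ∧
    (y p = false ∨ (y p = true ∧ (p = [] ∨ y p.dropLast = false)))}

/-- `K̃(T,y)`: the number of nodes of `T'_y` having no child in `T'_y`. -/
noncomputable def SBTree.Ktilde (T : SBTree) (y : List Bool → Bool) : ℕ :=
  Set.ncard {p | p ∈ T.Tset y ∧ (p ++ [false]) ∉ T.Tset y ∧ (p ++ [true]) ∉ T.Tset y}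

/-- The number of cherries `s(T)`: internal nodes both of whose children are leaves
(equivalently, the number of pairs of sibling leaves `|L_s(T)|`). -/
def SBTree.cherries : SBTree → ℕ
  | .leaf => 0
  | .node .leaf .leaf => 1
  | .node l r => l.cherries + r.cherries

/-- The number of leaves of a strongly binary tree. -/
def SBTree.nleaves : SBTree → ℕ
  | .leaf => 1
  | .node l r => l.nleaves + r.nleaves

namespace SBTree

lemma subtreeAt_append (T : SBTree) (p q : List Bool) :
    T.subtreeAt (p ++ q) = (T.subtreeAt p).bind (fun t => t.subtreeAt q) := by
  induction p generalizing T with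
  | nil => simp [subtreeAt]
  | cons b p ih =>
    cases T with
    | leaf => simp [subtreeAt]
    | node l r => cases b <;> simp [subtreeAt, ih]

lemma isNodePos_of_append {T : SBTree} {p q : List Bool} (h : T.IsNodePos (p ++ q)) :
    T.IsNodePos p := by
  unfold IsNodePos at *
  rw [subtreeAt_append] at h
  cases hp : T.subtreeAt p with
  | none => rw [hp] at h; simp at h
  | some t => simp

lemma isInternalPos_of_child {T : SBTree} {p : List Bool} {b : Bool}
    (h : T.IsNodePos (p ++ [b])) : T.IsInternalPos p := by
  unfold IsNodePos at h
  rw [subtreeAt_append] at h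
  cases hp : T.subtreeAt p with
  | none => rw [hp] at h; simp at h
  | some t =>
    rw [hp] at h
    cases t with
    | leaf => simp [subtreeAt] at h
    | node l r => exact ⟨l, r, hp⟩

def nodes : SBTree → Finset (List Bool)
  | .leaf => {[]}
  | .node l r => insert [] (l.nodes.image (List.cons false) ∪ r.nodes.image (List.cons true))

lemma mem_nodes {T : SBTree} {p : List Bool} : p ∈ T.nodes ↔ T.IsNodePos p := by
  induction T generalizing p with
  | leaf =>
    cases p with
    | nil => simp [nodes, IsNodePos, subtreeAt]
    | cons b q => simp [nodes, IsNodePos, subtreeAt]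
  | node l r ihl ihr =>
    cases p with
    | nil => simp [nodes, IsNodePos, subtreeAt]
    | cons b q =>
      cases b
      · simp [nodes, IsNodePos, subtreeAt]; exact ihl
      · simp [nodes, IsNodePos, subtreeAt]; exact ihr

lemma card_nodes (T : SBTree) : T.nodes.card + 1 = 2 * T.nleaves := by
  induction T with
  | leaf => simp [nodes, nleaves]
  | node l r ihl ihr =>
    have hdisj : Disjoint (l.nodes.image (List.cons false)) (r.nodes.image (List.cons true)) := by
      rw [Finset.disjoint_left]
      intro p hp hp'
      simp only [Finset.mem_image] at hp hp'
      obtain ⟨a, -, rfl⟩ := hp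
      obtain ⟨b, -, hb⟩ := hp'
      simp at hb
    have hnotmem : [] ∉ l.nodes.image (List.cons false) ∪ r.nodes.image (List.cons true) := by
      simp
    rw [nodes, Finset.card_insert_of_notMem hnotmem, Finset.card_union_of_disjoint hdisj,
      Finset.card_image_of_injective _ (List.cons_injective),
      Finset.card_image_of_injective _ (List.cons_injective)]
    simp only [nleaves]
    omega

lemma exists_prefix_mem_LB {T : SBTree} {y : List Bool → Bool} :
    ∀ p, T.IsNodePos p → y p = true → ∃ q, q <+: p ∧ q ∈ T.LB y := by
  intro p
  induction p using List.reverseRecOn with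
  | nil => intro hn hy; exact ⟨[], List.prefix_refl _, hn, hy, Or.inl rfl⟩
  | append_singleton p b ih =>
    intro hn hy
    by_cases hpar : y p = true
    · obtain ⟨q, hq, hmem⟩ := ih (isNodePos_of_append hn) hpar
      exact ⟨q, hq.trans (List.prefix_append _ _), hmem⟩
    · refine ⟨p ++ [b], List.prefix_refl _, hn, hy, Or.inr ?_⟩
      rw [List.dropLast_concat]
      revert hpar; cases y p <;> simp

lemma y_true_of_prefix {T : SBTree} {y : List Bool → Bool} (hc : T.IsCut y) :
    ∀ p, T.IsNodePos p → ∀ q, q <+: p → y q = true → y p = true := by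
  intro p
  induction p using List.reverseRecOn with
  | nil =>
    intro _ q hq hy
    rwa [List.prefix_nil.mp hq] at hy
  | append_singleton p b ih =>
    intro hn q hq hy
    rcases List.prefix_concat_iff.mp hq with rfl | hq'
    · exact hy
    · have hp : y p = true := ih (isNodePos_of_append hn) q hq' hy
      have hint := hc.2.2 p (isInternalPos_of_child hn) hp
      cases b
      · exact hint.1
      · exact hint.2

lemma cut_ext {T : SBTree} {y1 y2 : List Bool → Bool} (h1 : T.IsCut y1) (h2 : T.IsCut y2)
    (hLB : T.LB y1 = T.LB y2) : y1 = y2 := by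
  have key : ∀ (y : List Bool → Bool), T.IsCut y → ∀ p, T.IsNodePos p →
      (y p = true ↔ ∃ q, q <+: p ∧ q ∈ T.LB y) := by
    intro y hy p hp
    constructor
    · exact exists_prefix_mem_LB p hp
    · rintro ⟨q, hq, -, hq2, -⟩
      exact y_true_of_prefix hy p hp q hq hq2
  funext p
  by_cases hn : T.IsNodePos p
  · rw [Bool.eq_iff_iff]
    rw [key y1 h1 p hn, key y2 h2 p hn, hLB]
  · rw [h1.1 p hn, h2.1 p hn]

lemma sum_choose_le (m K : ℕ) :
    ∑ k ∈ Finset.range (K + 1), m.choose k ≤ (m + 1) ^ K := by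
  induction K with
  | zero => simp
  | succ K ih =>
    have hK' : m.choose K ≤ (m + 1) ^ K :=
      le_trans (Finset.single_le_sum (f := fun k => m.choose k)
        (fun _ _ => Nat.zero_le _) (Finset.self_mem_range_succ K)) ih
    have h1 : m.choose (K + 1) ≤ m * (m + 1) ^ K := by
      calc m.choose (K + 1) ≤ m.choose (K + 1) * (K + 1) :=
            Nat.le_mul_of_pos_right _ (Nat.succ_pos K)
        _ = m.choose K * (m - K) := Nat.choose_succ_right_eq m K
        _ ≤ (m + 1) ^ K * m := Nat.mul_le_mul hK' (Nat.sub_le m K)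
        _ = m * (m + 1) ^ K := Nat.mul_comm _ _
    calc ∑ k ∈ Finset.range (K + 2), m.choose k
        = ∑ k ∈ Finset.range (K + 1), m.choose k + m.choose (K + 1) :=
          Finset.sum_range_succ _ _
      _ ≤ (m + 1) ^ K + m * (m + 1) ^ K := Nat.add_le_add ih h1
      _ = (m + 1) ^ (K + 1) := by ring

lemma card_small_powerset {α : Type*} [DecidableEq α] (S : Finset α) (K : ℕ) :
    (S.powerset.filter (fun s => s.card ≤ K)).card ≤ (S.card + 1) ^ K := by
  have heq : S.powerset.filter (fun s => s.card ≤ K) =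
      (Finset.range (K + 1)).biUnion (fun k => S.powersetCard k) := by
    ext s
    simp only [Finset.mem_filter, Finset.mem_powerset, Finset.mem_biUnion,
      Finset.mem_range, Finset.mem_powersetCard, Nat.lt_succ_iff]
    constructor
    · rintro ⟨h1, h2⟩; exact ⟨s.card, h2, h1, rfl⟩
    · rintro ⟨k, hk, h1, rfl⟩; exact ⟨h1, hk⟩
  calc (S.powerset.filter (fun s => s.card ≤ K)).card
      ≤ ∑ k ∈ Finset.range (K + 1), (S.powersetCard k).card := by
        rw [heq]; exact Finset.card_biUnion_le
    _ = ∑ k ∈ Finset.range (K + 1), S.card.choose k := by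
        simp [Finset.card_powersetCard]
    _ ≤ (S.card + 1) ^ K := sum_choose_le _ _

noncomputable def LBF (T : SBTree) (y : List Bool → Bool) : Finset (List Bool) := by
  classical
  exact T.nodes.filter (fun p => y p = true ∧ (p = [] ∨ y p.dropLast = false))

lemma coe_LBF (T : SBTree) (y : List Bool → Bool) : (T.LBF y : Set (List Bool)) = T.LB y := by
  ext p
  simp [LBF, LB, mem_nodes]

end SBTree

/-- Polynomial bound on the size of the comparison class `C(T,K)`: for a strongly
binary tree with `n ≥ 2` leaves and `K ≥ 1`, the number of cuts inducing
clusterings with at most `K` clusters is at most `(2n)^K`. -/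
theorem card_cuts_with_at_most_K_clusters (T : SBTree) (hn : 2 ≤ T.nleaves)
    (K : ℕ) (hK : 1 ≤ K) :
    Set.ncard {y : List Bool → Bool | T.IsCut y ∧ (T.LB y).ncard ≤ K} ≤
      (2 * T.nleaves) ^ K := by
  classical
  set A := {y : List Bool → Bool | T.IsCut y ∧ (T.LB y).ncard ≤ K} with hA
  set B := T.nodes.powerset.filter (fun s => s.card ≤ K) with hB
  have hinj : Set.InjOn T.LBF A := by
    intro y1 hy1 y2 hy2 h
    exact SBTree.cut_ext hy1.1 hy2.1 (by rw [← SBTree.coe_LBF, ← SBTree.coe_LBF, h])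
  have hsub : T.LBF '' A ⊆ ↑B := by
    rintro s ⟨y, hy, rfl⟩
    simp only [hB, Finset.coe_filter, Set.mem_setOf_eq, Finset.mem_powerset]
    have hcard : (T.LBF y).card = (T.LB y).ncard := by
      rw [← SBTree.coe_LBF, Set.ncard_coe_finset]
    exact ⟨Finset.filter_subset _ _, by rw [hcard]; exact hy.2⟩
  calc A.ncard = (T.LBF '' A).ncard := (Set.ncard_image_of_injOn hinj).symm
    _ ≤ (↑B : Set (Finset (List Bool))).ncard := Set.ncard_le_ncard hsub B.finite_toSet
    _ = B.card := Set.ncard_coe_finset B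
    _ ≤ (T.nodes.card + 1) ^ K := SBTree.card_small_powerset _ _
    _ = (2 * T.nleaves) ^ K := by rw [SBTree.card_nodes]
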